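/- Let T ≥ 3, d ≥ 1, and run the fixed-share forecaster with time-varying parameters η_t = sqrt(ln(dt)/t) for t ≥ 3 (with η_0 = η_1 = η_2 = η_3) and α_t = 1/t. Then for all loss sequences ℓ_t ∈ [0,1]^d, max over intervals [r,s] ⊆ [1,T] of (Σ_{t=r}^s p_t·ℓ_t - min_{q∈Δ_d} Σ_{t=r}^s q·ℓ_t) ≤ sqrt(2T ln(dT)) + sqrt(3 ln(3d)). -/

import Mathlib

/-!
Each round is an exponential-weights step with exponent `η_t / η_{t-1} ≤ 1` applied to the
previous weights. The power-mean inequality and Hoeffding's lemma bound its normaliser, which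
bounds the regret of round `t` against expert `j` by
`η_{t-1}/8 + log (d v_{t+1,j}) / η_t - log (d p_{t,j}) / η_{t-1}`.
With `α_t = 1/t` the share step gives `v_{t+1,j} ≤ t/(t-1) · p_{t+1,j}` and
`p_{t,j} ≥ 1/((t-1) d)`, so from `t = 2` on these bounds telescope in the nonnegative potential
`Ψ_t = log ((t-1) d p_{t,j}) / η_{t-1}`, while the first round costs an extra `log d / η_1`.
Over `[r, s]` the regret is therefore at most `Σ η_{t-1}/8 + log (d s) / η_s + log d / η_1`;
for `η_t = √(log (d t) / t)` these terms are at most `(7/24) √(T log (d T))`, `√(T log (d T))`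
and `√(3 log (3 d))`, and `1 + 7/24 ≤ √2`. A mixture `q` is never better than the best expert.
-/

open Real Finset

open MeasureTheory ProbabilityTheory in
theorem log_one_sub_add_mul_exp_le {q : ℝ} (hq : q ∈ Set.Icc 0 1) (s : ℝ) :
    log (1 - q + q * exp s) ≤ q * s + s ^ 2 / 8 := by
  set X : Bool → ℝ := fun b => if b then 1 else 0
  have hmgf : q * exp (s * (1 - q)) + (1 - q) * exp (-(s * q)) ≤ exp (s ^ 2 / 8) := by
    have := (hasSubgaussianMGF_of_mem_Icc (μ := bernoulliMeasure true false ⟨q, hq⟩) (X := X)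
      (a := 0) (b := 1) Measurable.of_discrete.aemeasurable
      (ae_of_all _ fun b => by cases b <;> simp [X])).mgf_le s
    norm_num [mgf, integral_bernoulliMeasure, X] at this
    exact this.trans_eq (by ring_nf)
  have h1 : exp (s * q) * exp (s * (1 - q)) = exp s := by rw [← exp_add]; ring_nf
  have h2 : exp (s * q) * exp (-(s * q)) = 1 := by rw [← exp_add, add_neg_cancel, exp_zero]
  rw [log_le_iff_le_exp (by nlinarith [exp_pos s, hq.1, hq.2, mul_pos (exp_pos s) (exp_pos s)])]
  calc 1 - q + q * exp s = exp (s * q) * (q * exp (s * (1 - q)) + (1 - q) * exp (-(s * q))) := by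
        linear_combination q * h1.symm + (1 - q) * h2.symm
    _ ≤ exp (s * q) * exp (s ^ 2 / 8) := by gcongr
    _ = exp (q * s + s ^ 2 / 8) := by rw [← exp_add, mul_comm]

theorem exp_neg_mul_le_one_sub_add_mul_exp_neg {x : ℝ} (hx : x ∈ Set.Icc 0 1) (η : ℝ) :
    exp (-η * x) ≤ 1 - x + x * exp (-η) := by
  have := convexOn_exp.2 (Set.mem_univ 0) (Set.mem_univ (-η)) (sub_nonneg.2 hx.2) hx.1
    (sub_add_cancel 1 x)
  simpa [mul_comm] using this

theorem sum_rpow_le_card_rpow_mul_sum_rpow {ι : Type*} [Fintype ι] [Nonempty ι] {β : ℝ}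
    (hβ0 : 0 ≤ β) (hβ1 : β ≤ 1) {x : ι → ℝ} (hx : ∀ i, 0 ≤ x i) :
    ∑ i, x i ^ β ≤ (Fintype.card ι : ℝ) ^ (1 - β) * (∑ i, x i) ^ β := by
  set n : ℝ := (Fintype.card ι : ℝ)
  have hn : 0 < n := by positivity
  have hJensen := (concaveOn_rpow hβ0 hβ1).le_map_sum (t := univ) (w := fun _ => n⁻¹) (p := x)
    (fun _ _ => by positivity) (by simp [n]) (fun i _ => hx i)
  simp only [smul_eq_mul, ← mul_sum] at hJensen
  rw [mul_rpow (by positivity) (sum_nonneg fun i _ => hx i)] at hJensen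
  calc ∑ i, x i ^ β = n * (n⁻¹ * ∑ i, x i ^ β) := by field_simp
    _ ≤ n * (n⁻¹ ^ β * (∑ i, x i) ^ β) := by gcongr
    _ = n ^ (1 - β) * (∑ i, x i) ^ β := by
      rw [← mul_assoc, inv_rpow hn.le, rpow_sub hn, rpow_one, div_eq_mul_inv]

theorem exists_le_sum_mul {ι : Type*} [Fintype ι] {q : ι → ℝ} (hq0 : ∀ i, 0 ≤ q i)
    (hq1 : ∑ i, q i = 1) (L : ι → ℝ) : ∃ j, L j ≤ ∑ i, q i * L i := by
  have h := inf_le_centerMass (s := univ) (f := L) (fun i _ => hq0 i) (by rw [hq1]; exact one_pos)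
  simpa [centerMass, hq1] using h

theorem div_sqrt_div_self {u c : ℝ} (hu : 0 ≤ u) (hc : 0 ≤ c) : u / √(u / c) = √(c * u) := by
  rcases hu.eq_or_lt with rfl | hu
  · simp
  rcases hc.eq_or_lt with rfl | hc
  · simp
  rw [sqrt_div hu.le, sqrt_mul hc.le, div_div_eq_mul_div, div_eq_iff (by positivity),
    mul_assoc, mul_self_sqrt hu.le, mul_comm]

theorem sum_range_inv_sqrt_le (n : ℕ) : ∑ i ∈ range n, 1 / √(i + 1) ≤ 2 * √n := by
  induction n with
  | zero => simp
  | succ n ih =>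
    rw [sum_range_succ]
    have hpos : 0 < √(n + 1) := sqrt_pos.2 (by positivity)
    have : 1 / √(n + 1) ≤ 2 * (√(n + 1) - √n) := by
      rw [div_le_iff₀ hpos]
      nlinarith [sq_sqrt (by positivity : (0 : ℝ) ≤ n + 1), sq_sqrt (Nat.cast_nonneg (α := ℝ) n),
        sq_nonneg (√(n + 1) - √n)]
    push_cast
    linarith

section ExpWeights

variable {ι : Type*} [Fintype ι]

noncomputable def expWeights (η η' : ℝ) (p ℓ : ι → ℝ) (j : ι) : ℝ :=
  p j ^ (η' / η) * exp (-η' * ℓ j) / ∑ i, p i ^ (η' / η) * exp (-η' * ℓ i)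

variable {η η' : ℝ} {p ℓ : ι → ℝ}

theorem sum_rpow_mul_exp_pos [Nonempty ι] (hp : ∀ i, 0 < p i) :
    0 < ∑ i, p i ^ (η' / η) * exp (-η' * ℓ i) :=
  sum_pos (fun i _ => by have := hp i; positivity) univ_nonempty

theorem expWeights_pos [Nonempty ι] (hp : ∀ i, 0 < p i) (j : ι) : 0 < expWeights η η' p ℓ j := by
  have := hp j
  have := sum_rpow_mul_exp_pos (η := η) (η' := η') (ℓ := ℓ) hp
  unfold expWeights; positivity

theorem sum_expWeights [Nonempty ι] (hp : ∀ i, 0 < p i) : ∑ j, expWeights η η' p ℓ j = 1 := by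
  simp only [expWeights, ← sum_div]
  exact div_self (sum_rpow_mul_exp_pos hp).ne'

theorem log_sum_rpow_mul_exp_le (hp : ∀ i, 0 < p i) (hp1 : ∑ i, p i = 1)
    (hℓ : ∀ i, ℓ i ∈ Set.Icc 0 1) (hη' : 0 < η') (hη'η : η' ≤ η) :
    log (∑ i, p i ^ (η' / η) * exp (-η' * ℓ i))
      ≤ (1 - η' / η) * log (Fintype.card ι) - η' * ∑ i, p i * ℓ i + η' * η / 8 := by
  have : Nonempty ι := by
    by_contra h
    simp [not_nonempty_iff.1 h] at hp1
  have hη : 0 < η := hη'.trans_le hη'η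
  set β := η' / η
  have hβη : β * η = η' := div_mul_cancel₀ η' hη.ne'
  set A := ∑ i, p i * ℓ i
  have hA : A ∈ Set.Icc 0 1 :=
    ⟨sum_nonneg fun i _ => mul_nonneg (hp i).le (hℓ i).1,
      (sum_le_sum fun i _ => mul_le_of_le_one_right (hp i).le (hℓ i).2).trans_eq hp1⟩
  set x : ι → ℝ := fun i => p i * exp (-η * ℓ i)
  have hx : ∀ i, x i ^ β = p i ^ β * exp (-η' * ℓ i) := fun i => by
    rw [mul_rpow (hp i).le (exp_pos _).le, ← exp_mul, ← hβη]
    ring_nf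
  have hxpos : 0 < ∑ i, x i := sum_pos (fun i _ => by have := hp i; positivity) univ_nonempty
  have hsum_x : ∑ i, x i ≤ 1 - A + A * exp (-η) := calc
    ∑ i, x i ≤ ∑ i, p i * (1 - ℓ i + ℓ i * exp (-η)) :=
      sum_le_sum fun i _ =>
        mul_le_mul_of_nonneg_left (exp_neg_mul_le_one_sub_add_mul_exp_neg (hℓ i) η) (hp i).le
    _ = 1 - A + A * exp (-η) := by
      simp only [mul_add, mul_sub, mul_one, sum_add_distrib, sum_sub_distrib, hp1, ← mul_assoc,
        ← sum_mul, A]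
  have hlog_x : log (∑ i, x i) ≤ -η * A + η ^ 2 / 8 := calc
    log (∑ i, x i) ≤ log (1 - A + A * exp (-η)) := log_le_log hxpos hsum_x
    _ ≤ A * -η + (-η) ^ 2 / 8 := log_one_sub_add_mul_exp_le hA (-η)
    _ = -η * A + η ^ 2 / 8 := by ring
  have hβ0 : 0 ≤ β := by positivity
  calc log (∑ i, p i ^ β * exp (-η' * ℓ i)) = log (∑ i, x i ^ β) := by simp only [hx]
    _ ≤ log ((Fintype.card ι : ℝ) ^ (1 - β) * (∑ i, x i) ^ β) :=
      log_le_log (sum_pos (fun i _ => by have := hp i; positivity) univ_nonempty)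
        (sum_rpow_le_card_rpow_mul_sum_rpow hβ0 (div_le_one_of_le₀ hη'η hη.le)
          fun i => (mul_pos (hp i) (exp_pos _)).le)
    _ = (1 - β) * log (Fintype.card ι) + β * log (∑ i, x i) := by
      rw [log_mul (by positivity) (by positivity), log_rpow (by positivity), log_rpow hxpos]
    _ ≤ (1 - β) * log (Fintype.card ι) + β * (-η * A + η ^ 2 / 8) := by gcongr
    _ = (1 - β) * log (Fintype.card ι) - η' * A + η' * η / 8 := by rw [← hβη]; ring

theorem sum_mul_sub_le_log_expWeights (hp : ∀ i, 0 < p i) (hp1 : ∑ i, p i = 1)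
    (hℓ : ∀ i, ℓ i ∈ Set.Icc 0 1) (hη' : 0 < η') (hη'η : η' ≤ η) (j : ι) :
    ∑ i, p i * ℓ i - ℓ j ≤ η / 8 + log (Fintype.card ι * expWeights η η' p ℓ j) / η'
      - log (Fintype.card ι * p j) / η := by
  have : Nonempty ι := ⟨j⟩
  have hn : (0 : ℝ) < Fintype.card ι := by positivity
  have hZ := sum_rpow_mul_exp_pos (η := η) (η' := η') (ℓ := ℓ) hp
  have hlog_w : log (expWeights η η' p ℓ j) = η' / η * log (p j) - η' * ℓ j
      - log (∑ i, p i ^ (η' / η) * exp (-η' * ℓ i)) := by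
    rw [expWeights, log_div (by have := hp j; positivity) hZ.ne',
      log_mul (by have := hp j; positivity) (exp_pos _).ne', log_rpow (hp j), log_exp]
    ring
  have hmix := log_sum_rpow_mul_exp_le hp hp1 hℓ hη' hη'η
  rw [log_mul hn.ne' (expWeights_pos hp j).ne', log_mul hn.ne' (hp j).ne', hlog_w]
  have hsplit : η / 8 + (log (Fintype.card ι) + (η' / η * log (p j) - η' * ℓ j
        - log (∑ i, p i ^ (η' / η) * exp (-η' * ℓ i)))) / η'
        - (log (Fintype.card ι) + log (p j)) / η
      = ∑ i, p i * ℓ i - ℓ j + ((1 - η' / η) * log (Fintype.card ι) - η' * ∑ i, p i * ℓ i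
        + η' * η / 8 - log (∑ i, p i ^ (η' / η) * exp (-η' * ℓ i))) / η' := by
    field_simp
    ring
  rw [hsplit]
  have := div_nonneg (sub_nonneg.2 hmix) hη'.le
  linarith

end ExpWeights

structure IsFixedShare (d T : ℕ) (η α : ℕ → ℝ) (ℓ p v : ℕ → Fin d → ℝ) : Prop where
  init : ∀ j, p 1 j = 1 / d
  weights : ∀ t ∈ Icc 1 T, v (t + 1) = expWeights (η (t - 1)) (η t) (p t) (ℓ t)
  share : ∀ t ∈ Icc 1 T, ∀ j, p (t + 1) j = α t / d + (1 - α t) * v (t + 1) j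

noncomputable def sharePotential {d : ℕ} (η : ℕ → ℝ) (p : ℕ → Fin d → ℝ) (j : Fin d) (t : ℕ) :
    ℝ :=
  log ((t - 1) * d * p t j) / η (t - 1)

theorem sharePotential_succ_le {d : ℕ} {η : ℕ → ℝ} {p : ℕ → Fin d → ℝ} {j : Fin d} {s : ℕ}
    (hs : 0 < s) (hp0 : 0 < p (s + 1) j) (hp1 : p (s + 1) j ≤ 1) (hη : 0 ≤ η s) :
    sharePotential η p j (s + 1) ≤ log (d * s) / η s := by
  have hd : (0 : ℝ) < d := by have := j.pos; exact_mod_cast this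
  have hcast : ((s + 1 : ℕ) : ℝ) - 1 = s := by push_cast; ring
  rw [sharePotential, hcast, Nat.add_sub_cancel, mul_comm (s : ℝ)]
  exact div_le_div_of_nonneg_right
    (log_le_log (by positivity) (mul_le_of_le_one_right (by positivity) hp1)) hη

namespace IsFixedShare

variable {d T : ℕ} {η α : ℕ → ℝ} {ℓ p v : ℕ → Fin d → ℝ}

theorem pos_and_sum_eq_one (h : IsFixedShare d T η α ℓ p v) (hd : 0 < d)
    (hα : ∀ t ∈ Icc 1 T, α t ∈ Set.Icc 0 1) :
    ∀ t ∈ Icc 1 (T + 1), (∀ i, 0 < p t i) ∧ ∑ i, p t i = 1 := by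
  have : Nonempty (Fin d) := ⟨⟨0, hd⟩⟩
  have hd' : (0 : ℝ) < d := by exact_mod_cast hd
  intro t ht
  obtain ⟨ht1, htT⟩ := mem_Icc.1 ht
  induction t, ht1 using Nat.le_induction with
  | base =>
    refine ⟨fun i => by rw [h.init]; positivity, ?_⟩
    simp [h.init, hd'.ne']
  | succ t ht1 ih =>
    have htT' : t ∈ Icc 1 T := mem_Icc.2 ⟨ht1, by omega⟩
    obtain ⟨hp, -⟩ := ih (mem_Icc.2 ⟨ht1, by omega⟩) (by omega)
    obtain ⟨hα0, hα1⟩ := hα t htT'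
    have hshare := h.share t htT'
    rw [h.weights t htT'] at hshare
    constructor
    · intro i
      have := expWeights_pos (η := η (t - 1)) (η' := η t) (ℓ := ℓ t) hp i
      rw [hshare]
      rcases hα1.lt_or_eq with hα1 | hα1
      · have : 0 < 1 - α t := by linarith
        positivity
      · simp [hα1, hd']
    · simp only [hshare, sum_add_distrib, ← mul_sum, sum_expWeights hp, sum_const, card_univ,
        Fintype.card_fin, nsmul_eq_mul, mul_one]
      field_simp
      ring

theorem regret_first_round_le (h : IsFixedShare d T η α ℓ p v) (hd : 0 < d)
    (hℓ : ∀ i, ℓ 1 i ∈ Set.Icc 0 1) (hη : 0 < η 1) (hη10 : η 1 ≤ η 0) (j : Fin d) :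
    ∑ i, p 1 i * ℓ 1 i - ℓ 1 j ≤ η 0 / 8 + log d / η 1 := by
  have : Nonempty (Fin d) := ⟨⟨0, hd⟩⟩
  have hd' : (0 : ℝ) < d := by exact_mod_cast hd
  have hp : ∀ i, 0 < p 1 i := fun i => by rw [h.init]; positivity
  have hround := sum_mul_sub_le_log_expWeights hp (by simp [h.init, hd'.ne']) hℓ hη hη10 j
  have hw_pos := expWeights_pos (η := η 0) (η' := η 1) (ℓ := ℓ 1) hp j
  have hw_le : expWeights (η 0) (η 1) (p 1) (ℓ 1) j ≤ 1 :=
    (single_le_sum (fun i _ => (expWeights_pos hp i).le) (mem_univ j)).trans_eq (sum_expWeights hp)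
  have hlog_w : log (d * expWeights (η 0) (η 1) (p 1) (ℓ 1) j) ≤ log d :=
    log_le_log (by positivity) (mul_le_of_le_one_right hd'.le hw_le)
  rw [Fintype.card_fin, h.init j, mul_one_div_cancel hd'.ne', log_one, zero_div,
    sub_zero] at hround
  have := div_le_div_of_nonneg_right hlog_w hη.le
  linarith

theorem regret_le_sharePotential_sub (h : IsFixedShare d T η α ℓ p v) {t : ℕ} (ht : t ∈ Icc 2 T)
    (hp : ∀ i, 0 < p t i) (hp1 : ∑ i, p t i = 1) (hℓ : ∀ i, ℓ t i ∈ Set.Icc 0 1)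
    (hη : 0 < η t) (hηt : η t ≤ η (t - 1)) (hα : α t = 1 / t) (j : Fin d) :
    ∑ i, p t i * ℓ t i - ℓ t j
      ≤ η (t - 1) / 8 + (sharePotential η p j (t + 1) - sharePotential η p j t) := by
  obtain ⟨ht2, htT⟩ := mem_Icc.1 ht
  have ht' : t ∈ Icc 1 T := mem_Icc.2 ⟨by omega, htT⟩
  have : Nonempty (Fin d) := ⟨j⟩
  have hd : (0 : ℝ) < d := by have := j.pos; exact_mod_cast this
  have htR : (2 : ℝ) ≤ t := by exact_mod_cast ht2
  have hround := sum_mul_sub_le_log_expWeights hp hp1 hℓ hη hηt j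
  rw [Fintype.card_fin, ← h.weights t ht'] at hround
  have hv := expWeights_pos (η := η (t - 1)) (η' := η t) (ℓ := ℓ t) hp j
  rw [← h.weights t ht'] at hv
  have hshare : (t - 1) * v (t + 1) j ≤ t * p (t + 1) j := by
    rw [h.share t ht' j, hα]
    field_simp
    nlinarith
  have hlog_v : log (t - 1) + log (d * v (t + 1) j) ≤ log (t * d * p (t + 1) j) := by
    rw [← log_mul (by linarith) (by positivity)]
    exact log_le_log (mul_pos (by linarith) (by positivity)) (by nlinarith)
  have hlog_p : log ((t - 1) * d * p t j) = log (t - 1) + log (d * p t j) := by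
    rw [mul_assoc, log_mul (by linarith) (by have := hp j; positivity)]
  have hanti : log (t - 1) / η (t - 1) ≤ log (t - 1) / η t :=
    div_le_div_of_nonneg_left (log_nonneg (by linarith)) hη hηt
  have hcast : ((t + 1 : ℕ) : ℝ) - 1 = t := by push_cast; ring
  have := div_le_div_of_nonneg_right hlog_v hη.le
  simp only [sharePotential, Nat.add_sub_cancel, hcast, hlog_p, add_div] at this ⊢
  linarith

theorem sharePotential_succ_nonneg (h : IsFixedShare d T η α ℓ p v) {t : ℕ} (ht : t ∈ Icc 1 T)
    (hp : ∀ i, 0 < p t i) (hα : α t = 1 / t) (hη : 0 ≤ η t) (j : Fin d) :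
    0 ≤ sharePotential η p j (t + 1) := by
  have : Nonempty (Fin d) := ⟨j⟩
  have hd : (0 : ℝ) < d := by have := j.pos; exact_mod_cast this
  have ht1 : (1 : ℝ) ≤ t := by exact_mod_cast (mem_Icc.1 ht).1
  have hv := expWeights_pos (η := η (t - 1)) (η' := η t) (ℓ := ℓ t) hp j
  rw [← h.weights t ht] at hv
  have hcast : ((t + 1 : ℕ) : ℝ) - 1 = t := by push_cast; ring
  rw [sharePotential, hcast, Nat.add_sub_cancel, h.share t ht j, hα]
  refine div_nonneg (log_nonneg ?_) hη
  have : 0 ≤ (1 - 1 / (t : ℝ)) * v (t + 1) j :=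
    mul_nonneg (sub_nonneg.2 ((div_le_one (by positivity)).2 ht1)) hv.le
  calc (1 : ℝ) = t * d * (1 / t / d) := by field_simp
    _ ≤ _ := by gcongr; linarith

theorem interval_regret_le (h : IsFixedShare d T η α ℓ p v) (hd : 0 < d)
    (hα : ∀ t, 1 ≤ t → α t = 1 / (t : ℝ)) (hη : ∀ t, 0 < η t) (hη_anti : Antitone η)
    (hℓ : ∀ t ∈ Icc 1 T, ∀ j, ℓ t j ∈ Set.Icc (0 : ℝ) 1)
    {r s : ℕ} (hr : 1 ≤ r) (hrs : r ≤ s) (hsT : s ≤ T) (j : Fin d) :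
    ∑ t ∈ Icc r s, (∑ i, p t i * ℓ t i - ℓ t j)
      ≤ ∑ t ∈ Icc r s, η (t - 1) / 8 + log (d * s) / η s + log d / η 1 := by
  have hp := h.pos_and_sum_eq_one hd fun t ht => by
    have ht1 : (1 : ℝ) ≤ t := by exact_mod_cast (mem_Icc.1 ht).1
    rw [hα t (mem_Icc.1 ht).1]
    exact ⟨by positivity, (div_le_one (by positivity)).2 ht1⟩
  have hΨ_nonneg : ∀ m ∈ Icc 1 T, 0 ≤ sharePotential η p j (m + 1) := fun m hm =>
    h.sharePotential_succ_nonneg hm (hp m (Icc_subset_Icc_right (by omega) hm)).1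
      (hα m (mem_Icc.1 hm).1) (hη m).le j
  have hΨ_le : sharePotential η p j (s + 1) ≤ log (d * s) / η s := by
    obtain ⟨hpos, hsum⟩ := hp (s + 1) (mem_Icc.2 ⟨by omega, by omega⟩)
    exact sharePotential_succ_le (by omega) (hpos j)
      ((single_le_sum (fun i _ => (hpos i).le) (mem_univ j)).trans_eq hsum) (hη s).le
  have htail : ∀ m, 1 ≤ m → m ≤ s → ∑ t ∈ Ioc m s, (∑ i, p t i * ℓ t i - ℓ t j)
      ≤ ∑ t ∈ Ioc m s, η (t - 1) / 8 + log (d * s) / η s := by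
    intro m hm hms
    calc ∑ t ∈ Ioc m s, (∑ i, p t i * ℓ t i - ℓ t j)
        ≤ ∑ t ∈ Ioc m s, (η (t - 1) / 8
          + (sharePotential η p j (t + 1) - sharePotential η p j t)) := by
          refine sum_le_sum fun t ht => ?_
          obtain ⟨hmt, hts⟩ := mem_Ioc.1 ht
          have ht' : t ∈ Icc 1 (T + 1) := mem_Icc.2 ⟨by omega, by omega⟩
          exact h.regret_le_sharePotential_sub (mem_Icc.2 ⟨by omega, by omega⟩) (hp t ht').1
            (hp t ht').2 (hℓ t (mem_Icc.2 ⟨by omega, by omega⟩)) (hη t) (hη_anti (by omega))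
            (hα t (by omega)) j
      _ = ∑ t ∈ Ioc m s, η (t - 1) / 8
          + (sharePotential η p j (s + 1) - sharePotential η p j (m + 1)) := by
          rw [sum_add_distrib, ← Ico_add_one_add_one_eq_Ioc, sum_Ico_sub _ (by omega)]
      _ ≤ _ := by linarith [hΨ_nonneg m (mem_Icc.2 ⟨hm, by omega⟩)]
  have hη1 : 0 ≤ log d / η 1 := div_nonneg (log_natCast_nonneg d) (hη 1).le
  rcases hr.eq_or_lt with rfl | hr
  · have hfirst := h.regret_first_round_le hd (hℓ 1 (mem_Icc.2 ⟨le_rfl, by omega⟩)) (hη 1)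
      (hη_anti zero_le_one) j
    rw [← add_sum_Ioc_eq_sum_Icc hrs, ← add_sum_Ioc_eq_sum_Icc hrs]
    linarith [htail 1 le_rfl hrs]
  · have hIcc : Icc r s = Ioc (r - 1) s := by
      rw [← Icc_add_one_left_eq_Ioc, Nat.sub_add_cancel hr.le]
    rw [hIcc]
    linarith [htail (r - 1) (by omega) (by omega)]

end IsFixedShare

noncomputable def learningRate (d t : ℕ) : ℝ :=
  √(log (d * ((max t 3 : ℕ) : ℝ)) / ((max t 3 : ℕ) : ℝ))

theorem eq_learningRate {d : ℕ} {η : ℕ → ℝ} (hη : ∀ t, 3 ≤ t → η t = √(log (d * t) / t))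
    (hη0 : η 0 = η 3) (hη1 : η 1 = η 3) (hη2 : η 2 = η 3) : η = learningRate d := by
  funext t
  rcases le_or_gt 3 t with ht | ht
  · rw [hη t ht, learningRate, max_eq_left ht]
  · rw [learningRate, max_eq_right ht.le, ← hη 3 le_rfl]
    interval_cases t <;> assumption

section LearningRate

variable {d : ℕ}

theorem one_lt_log_mul_max (hd : 0 < d) (t : ℕ) : 1 < log (d * ((max t 3 : ℕ) : ℝ)) := by
  rw [lt_log_iff_exp_lt (by positivity)]
  have hd : (1 : ℝ) ≤ d := by exact_mod_cast hd
  have ht : (3 : ℝ) ≤ ((max t 3 : ℕ) : ℝ) := by exact_mod_cast le_max_right t 3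
  nlinarith [exp_one_lt_three]

theorem learningRate_pos (hd : 0 < d) (t : ℕ) : 0 < learningRate d t :=
  sqrt_pos.2 (div_pos (one_pos.trans (one_lt_log_mul_max hd t)) (by positivity))

theorem learningRate_antitone (hd : 0 < d) : Antitone (learningRate d) := by
  intro a b hab
  have hd' : (1 : ℝ) ≤ d := by exact_mod_cast hd
  have hm (t : ℕ) : exp 1 ≤ d * ((max t 3 : ℕ) : ℝ) := by
    have ht : (3 : ℝ) ≤ ((max t 3 : ℕ) : ℝ) := by exact_mod_cast le_max_right t 3
    nlinarith [exp_one_lt_three]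
  have key := log_div_self_antitoneOn (hm a) (hm b) (by gcongr)
  have hscale (t : ℕ) : log (d * ((max t 3 : ℕ) : ℝ)) / ((max t 3 : ℕ) : ℝ)
      = d * (log (d * ((max t 3 : ℕ) : ℝ)) / (d * ((max t 3 : ℕ) : ℝ))) := by
    field_simp
  rw [learningRate, learningRate, hscale a, hscale b]
  exact sqrt_le_sqrt (mul_le_mul_of_nonneg_left key (by positivity))

theorem learningRate_le (hd : 0 < d) {t T : ℕ} (hT : 3 ≤ T) (ht : t ≤ T) :
    learningRate d t ≤ √(log (d * T) / ((max t 3 : ℕ) : ℝ)) := by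
  have hm : ((max t 3 : ℕ) : ℝ) ≤ T := by exact_mod_cast max_le ht hT
  have hm0 : (0 : ℝ) < ((max t 3 : ℕ) : ℝ) := by positivity
  exact sqrt_le_sqrt (div_le_div_of_nonneg_right (log_le_log (by positivity) (by gcongr)) hm0.le)

theorem log_div_learningRate_le (hd : 0 < d) {s T : ℕ} (hT : 3 ≤ T) (hs : 1 ≤ s) (hsT : s ≤ T) :
    log (d * s) / learningRate d s ≤ √(T * log (d * T)) := by
  have hsm : (s : ℝ) ≤ ((max s 3 : ℕ) : ℝ) := by exact_mod_cast le_max_left s 3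
  have hmT : ((max s 3 : ℕ) : ℝ) ≤ T := by exact_mod_cast max_le hsT hT
  have hlog_m := one_lt_log_mul_max hd s
  calc log (d * s) / learningRate d s
      ≤ log (d * ((max s 3 : ℕ) : ℝ)) / learningRate d s := by
        gcongr
        exact (learningRate_pos hd s).le
    _ = √(((max s 3 : ℕ) : ℝ) * log (d * ((max s 3 : ℕ) : ℝ))) :=
        div_sqrt_div_self (by linarith) (by positivity)
    _ ≤ √(T * log (d * T)) := by
        gcongr

theorem log_div_learningRate_one_le (hd : 0 < d) :
    log d / learningRate d 1 ≤ √(3 * log (3 * d)) := by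
  have hlog := one_lt_log_mul_max hd 1
  calc log d / learningRate d 1 ≤ log (d * 3) / learningRate d 1 := by
        gcongr
        · exact (learningRate_pos hd 1).le
        · linarith
    _ = √(3 * log (3 * d)) := by
        have h13 : ((max 1 3 : ℕ) : ℝ) = 3 := by norm_num
        rw [h13] at hlog
        rw [learningRate, h13, div_sqrt_div_self (by linarith) (by norm_num), mul_comm (d : ℝ)]

theorem sum_learningRate_le (hd : 0 < d) {T : ℕ} (hT : 3 ≤ T) :
    ∑ t ∈ Icc 1 T, learningRate d (t - 1) ≤ 7 / 3 * √(T * log (d * T)) := by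
  have hL : 0 ≤ log (d * T) := by
    have := one_lt_log_mul_max hd T
    rw [max_eq_left hT] at this
    linarith
  obtain ⟨n, rfl⟩ : ∃ n, T = n + 1 := ⟨T - 1, by omega⟩
  rw [← Ico_add_one_right_eq_Icc, ← sum_Ico_add' _ 0 (n + 1) 1, ← range_eq_Ico]
  simp only [Nat.add_sub_cancel]
  rw [sum_range_succ']
  have hfirst : learningRate d 0 ≤ √(log (d * (n + 1 : ℕ)) / 3) := by
    simpa using learningRate_le hd hT (Nat.zero_le _)
  have hrest : ∀ i ∈ range n,
      learningRate d (i + 1) ≤ √(log (d * (n + 1 : ℕ))) * (1 / √(i + 1)) := by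
    intro i hi
    have hi := mem_range.1 hi
    refine (learningRate_le hd hT (by omega)).trans ?_
    rw [← div_eq_mul_one_div, ← sqrt_div' _ (by positivity)]
    gcongr
    exact_mod_cast le_max_left (i + 1) 3
  set L := log (d * (n + 1 : ℕ))
  have hT' : (3 : ℝ) ≤ (n + 1 : ℕ) := by exact_mod_cast hT
  have hfirst' : √(L / 3) ≤ √((n + 1 : ℕ) * L) / 3 := by
    rw [le_div_iff₀ (by norm_num), le_sqrt (by positivity) (by positivity), mul_pow,
      sq_sqrt (by positivity)]
    nlinarith
  have hrest' : √L * √n ≤ √((n + 1 : ℕ) * L) := by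
    rw [← sqrt_mul hL, mul_comm]
    gcongr
    linarith
  calc ∑ i ∈ range n, learningRate d (i + 1) + learningRate d 0
      ≤ ∑ i ∈ range n, √L * (1 / √(i + 1)) + √(L / 3) := add_le_add (sum_le_sum hrest) hfirst
    _ ≤ √L * (2 * √n) + √(L / 3) := by
      rw [← mul_sum]
      gcongr
      exact sum_range_inv_sqrt_le n
    _ ≤ 7 / 3 * √((n + 1 : ℕ) * L) := by linarith

end LearningRate

/-- Corollary 3 of the supplementary material: the fixed-share forecaster with
time-varying parameters `η_t = sqrt(ln(dt)/t)` (for `t ≥ 3`, with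
`η_0 = η_1 = η_2 = η_3`) and `α_t = 1/t` enjoys a horizon-independent
`T`-adaptive regret bound `sqrt(2T ln(dT)) + sqrt(3 ln(3d))`. -/
theorem stmt19 (d T : ℕ) (hd : 1 ≤ d) (hT : 3 ≤ T)
    (η α : ℕ → ℝ)
    (hηdef : ∀ t, 3 ≤ t → η t = Real.sqrt (Real.log (d * t) / t))
    (hη0 : η 0 = η 3) (hη1 : η 1 = η 3) (hη2 : η 2 = η 3)
    (hαdef : ∀ t, 1 ≤ t → α t = 1 / (t : ℝ))
    (ℓ p v : ℕ → Fin d → ℝ)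
    (hℓ : ∀ t ∈ Finset.Icc 1 T, ∀ j, ℓ t j ∈ Set.Icc (0 : ℝ) 1)
    (hp1 : ∀ j, p 1 j = 1 / d)
    (hv : ∀ t ∈ Finset.Icc 1 T, ∀ j,
      v (t + 1) j = p t j ^ (η t / η (t - 1)) * Real.exp (-η t * ℓ t j)
        / ∑ i, p t i ^ (η t / η (t - 1)) * Real.exp (-η t * ℓ t i))
    (hshare : ∀ t ∈ Finset.Icc 1 T, ∀ j,
      p (t + 1) j = α t / d + (1 - α t) * v (t + 1) j) :
    ∀ r s : ℕ, 1 ≤ r → r ≤ s → s ≤ T →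
      ∀ q : Fin d → ℝ, (∀ i, 0 ≤ q i) → (∑ i, q i = 1) →
        ∑ t ∈ Finset.Icc r s, (∑ i, p t i * ℓ t i)
            - ∑ t ∈ Finset.Icc r s, (∑ i, q i * ℓ t i)
          ≤ Real.sqrt (2 * T * Real.log (d * T)) + Real.sqrt (3 * Real.log (3 * d)) := by
  intro r s hr hrs hsT q hq0 hq1
  have hfs : IsFixedShare d T η α ℓ p v := ⟨hp1, fun t ht => funext (hv t ht), hshare⟩
  obtain rfl := eq_learningRate hηdef hη0 hη1 hη2
  obtain ⟨j, hj⟩ := exists_le_sum_mul hq0 hq1 fun i => ∑ t ∈ Icc r s, ℓ t i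
  simp only [mul_sum] at hj
  rw [sum_comm] at hj
  have hregret := hfs.interval_regret_le hd hαdef (learningRate_pos hd)
    (learningRate_antitone hd) hℓ hr hrs hsT j
  rw [sum_sub_distrib, ← sum_div] at hregret
  have hrates : ∑ t ∈ Icc r s, learningRate d (t - 1) ≤ 7 / 3 * √(T * log (d * T)) :=
    (sum_le_sum_of_subset_of_nonneg (Icc_subset_Icc hr hsT)
      fun _ _ _ => (learningRate_pos hd _).le).trans (sum_learningRate_le hd hT)
  have hlast := log_div_learningRate_le hd hT (hr.trans hrs) hsT
  have hfirst := log_div_learningRate_one_le hd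
  have hsqrt2 : 31 / 24 * √(T * log (d * T)) ≤ √(2 * T * log (d * T)) := by
    rw [mul_assoc, sqrt_mul zero_le_two]
    gcongr
    rw [le_sqrt (by norm_num) zero_le_two]
    norm_num
  linarith
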